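/- Let ζ_i and ζ_j be two disjoint nonempty ground-truth clusters whose union is the dataset D. If at every step s of the agglomerative merging process the condition min(ĥ(ℂ_s^i), ĥ(ℂ_s^j)) ≥ ĥ(ℂ_s^i, ℂ_s^j) holds with strict inequality whenever both ℂ_s^i and ℂ_s^j contain at least two subclusters, then the algorithm first merges all subclusters of ζ_i into one cluster and all subclusters of ζ_j into one cluster before performing any merge across ζ_i and ζ_j; hence both ζ_i and ζ_j appear as subtrees in the resulting dendrogram. -/
import Mathlib


open Finset

/-- Auxiliary: if the pair `(Cp, Cq)` is a cross pair (Cp ⊆ ζi, Cq ⊆ ζj) that is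
the strict maximizer of `h`, and the within-ζi condition holds, then `Cp` is the
unique current cluster contained in `ζi`. -/
lemma side_unique_aux {α : Type*} [DecidableEq α] {ζi ζj : Finset α}
    (hdisj : Disjoint ζi ζj)
    {h : Finset α → Finset α → ℝ} {S : Finset (Finset α)} {Cp Cq : Finset α}
    (hCp : Cp ∈ S) (hCpi : Cp ⊆ ζi) (hCqj : Cq ⊆ ζj) (hCqne : Cq.Nonempty)
    (hmax : ∀ A ∈ S, ∀ B ∈ S, A ≠ B → ¬(A = Cp ∧ B = Cq) → ¬(A = Cq ∧ B = Cp) →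
      h A B < h Cp Cq)
    (hc1 : 1 < (S.filter (· ⊆ ζi)).card →
      ∃ A ∈ S.filter (· ⊆ ζi), ∃ B ∈ S.filter (· ⊆ ζi), A ≠ B ∧ h Cp Cq ≤ h A B) :
    ∀ X ∈ S, X ⊆ ζi → X = Cp := by
  have hnotlt : ¬ 1 < (S.filter (· ⊆ ζi)).card := by
    intro hlt
    obtain ⟨A, hA, B, hB, hAB, hle⟩ := hc1 hlt
    rw [Finset.mem_filter] at hA hB
    obtain ⟨a, ha⟩ := hCqne
    have hBq : B ≠ Cq := by
      rintro rfl
      exact (Finset.disjoint_left.mp hdisj (hB.2 ha) (hCqj ha))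
    have hAq : A ≠ Cq := by
      rintro rfl
      exact (Finset.disjoint_left.mp hdisj (hA.2 ha) (hCqj ha))
    have := hmax A hA.1 B hB.1 hAB (fun hc => hBq hc.2) (fun hc => hAq hc.1)
    linarith
  intro X hX hXi
  by_contra hne
  exact hnotlt (Finset.one_lt_card.mpr
    ⟨X, Finset.mem_filter.mpr ⟨hX, hXi⟩, Cp, Finset.mem_filter.mpr ⟨hCp, hCpi⟩, hne⟩)

/-- If at every step the within-cluster maximal linkage dominates the
cross-cluster linkage (strictly when both ℂ_s^i and ℂ_s^j contain at least two
subclusters), then the greedy agglomerative algorithm on D = ζi ∪ ζj completes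
each of ζi and ζj before any merge across them: every subcluster appearing in
the process is contained in ζi, contained in ζj, or equals ζi ∪ ζj; and both
ζi and ζj appear as subtrees of the dendrogram. -/
theorem well_separated_clusters_extractable {α : Type*} [DecidableEq α]
    (ζi ζj : Finset α) (hdisj : Disjoint ζi ζj)
    (hi : ζi.Nonempty) (hj : ζj.Nonempty)
    (h : Finset α → Finset α → ℝ) (hsym : ∀ A B, h A B = h B A)
    (N : ℕ) (𝒞 : ℕ → Finset (Finset α))
    (h0 : 𝒞 0 = (ζi ∪ ζj).image (fun a => ({a} : Finset α)))
    (hstep : ∀ s < N, ∃ Cp ∈ 𝒞 s, ∃ Cq ∈ 𝒞 s, Cp ≠ Cq ∧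
      (∀ A ∈ 𝒞 s, ∀ B ∈ 𝒞 s, A ≠ B → ¬(A = Cp ∧ B = Cq) → ¬(A = Cq ∧ B = Cp) →
        h A B < h Cp Cq) ∧
      𝒞 (s + 1) = insert (Cp ∪ Cq) (((𝒞 s).erase Cp).erase Cq))
    (hend : 𝒞 N = {ζi ∪ ζj})
    (hcond : ∀ s < N, ∀ P ∈ (𝒞 s).filter (· ⊆ ζi), ∀ Q ∈ (𝒞 s).filter (· ⊆ ζj),
      (1 < ((𝒞 s).filter (· ⊆ ζi)).card →
        ∃ A ∈ (𝒞 s).filter (· ⊆ ζi), ∃ B ∈ (𝒞 s).filter (· ⊆ ζi),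
          A ≠ B ∧ h P Q ≤ h A B) ∧
      (1 < ((𝒞 s).filter (· ⊆ ζj)).card →
        ∃ A ∈ (𝒞 s).filter (· ⊆ ζj), ∃ B ∈ (𝒞 s).filter (· ⊆ ζj),
          A ≠ B ∧ h P Q ≤ h A B) ∧
      (1 < ((𝒞 s).filter (· ⊆ ζi)).card → 1 < ((𝒞 s).filter (· ⊆ ζj)).card →
        (∃ A ∈ (𝒞 s).filter (· ⊆ ζi), ∃ B ∈ (𝒞 s).filter (· ⊆ ζi),
          A ≠ B ∧ h P Q < h A B) ∧
        (∃ A ∈ (𝒞 s).filter (· ⊆ ζj), ∃ B ∈ (𝒞 s).filter (· ⊆ ζj),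
          A ≠ B ∧ h P Q < h A B))) :
    (∀ s ≤ N, ∀ C ∈ 𝒞 s, C ⊆ ζi ∨ C ⊆ ζj ∨ C = ζi ∪ ζj) ∧
    (∃ s ≤ N, ζi ∈ 𝒞 s) ∧ (∃ s ≤ N, ζj ∈ 𝒞 s) := by
  classical
  -- The main invariant, proved by induction on s.
  have key : ∀ s, s ≤ N →
      (∀ C ∈ 𝒞 s, C.Nonempty) ∧
      (∀ C ∈ 𝒞 s, ∀ C' ∈ 𝒞 s, C ≠ C' → Disjoint C C') ∧
      (∀ x ∈ ζi ∪ ζj, ∃ C ∈ 𝒞 s, x ∈ C) ∧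
      (∀ C ∈ 𝒞 s, C ⊆ ζi ∨ C ⊆ ζj ∨ C = ζi ∪ ζj) := by
    intro s
    induction s with
    | zero =>
      intro _
      refine ⟨?_, ?_, ?_, ?_⟩
      · intro C hC
        rw [h0, Finset.mem_image] at hC
        obtain ⟨a, -, rfl⟩ := hC
        exact Finset.singleton_nonempty a
      · intro C hC C' hC' hne
        rw [h0, Finset.mem_image] at hC hC'
        obtain ⟨a, -, rfl⟩ := hC
        obtain ⟨b, -, rfl⟩ := hC'
        simp only [Finset.disjoint_singleton] ; intro hab; exact hne (by rw [hab])
      · intro x hx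
        exact ⟨{x}, by rw [h0]; exact Finset.mem_image_of_mem _ hx, Finset.mem_singleton_self x⟩
      · intro C hC
        rw [h0, Finset.mem_image] at hC
        obtain ⟨a, ha, rfl⟩ := hC
        rcases Finset.mem_union.mp ha with ha | ha
        · exact Or.inl (Finset.singleton_subset_iff.mpr ha)
        · exact Or.inr (Or.inl (Finset.singleton_subset_iff.mpr ha))
    | succ s ih =>
      intro hs1
      have hsN : s < N := lt_of_lt_of_le (Nat.lt_succ_self s) hs1
      obtain ⟨hne, hdis, hcov, hside⟩ := ih (le_of_lt hsN)
      obtain ⟨Cp, hCp, Cq, hCq, hpq, hmax, hC1⟩ := hstep s hsN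
      -- the full set ζi ∪ ζj cannot be a current cluster at step s < N
      have noD : (ζi ∪ ζj) ∉ 𝒞 s := by
        intro hD
        have hsubD : ∀ C ∈ 𝒞 s, C ⊆ ζi ∪ ζj := by
          intro C hC
          rcases hside C hC with hc | hc | hc
          · exact hc.trans Finset.subset_union_left
          · exact hc.trans Finset.subset_union_right
          · exact hc.le
        have hCpD : Cp = ζi ∪ ζj := by
          by_contra hne'
          obtain ⟨a, ha⟩ := hne Cp hCp
          exact Finset.disjoint_left.mp (hdis Cp hCp _ hD hne') ha (hsubD Cp hCp ha)
        have hCqD : Cq = ζi ∪ ζj := by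
          by_contra hne'
          obtain ⟨a, ha⟩ := hne Cq hCq
          exact Finset.disjoint_left.mp (hdis Cq hCq _ hD hne') ha (hsubD Cq hCq ha)
        exact hpq (hCpD.trans hCqD.symm)
      -- membership in 𝒞 (s+1)
      have hmem : ∀ C, C ∈ 𝒞 (s + 1) ↔ C = Cp ∪ Cq ∨ (C ∈ 𝒞 s ∧ C ≠ Cp ∧ C ≠ Cq) := by
        intro C
        rw [hC1]
        simp only [Finset.mem_insert, Finset.mem_erase]
        tauto
      -- the main cross-pair analysis
      have crossCase : ∀ P Q : Finset α, P ∈ 𝒞 s → Q ∈ 𝒞 s → P ⊆ ζi → Q ⊆ ζj →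
          (∀ A ∈ 𝒞 s, ∀ B ∈ 𝒞 s, A ≠ B → ¬(A = P ∧ B = Q) → ¬(A = Q ∧ B = P) →
            h A B < h P Q) → P = ζi ∧ Q = ζj := by
        intro P Q hP hQ hPi hQj hmax'
        have hPf : P ∈ (𝒞 s).filter (· ⊆ ζi) := Finset.mem_filter.mpr ⟨hP, hPi⟩
        have hQf : Q ∈ (𝒞 s).filter (· ⊆ ζj) := Finset.mem_filter.mpr ⟨hQ, hQj⟩
        obtain ⟨hc1, hc2, -⟩ := hcond s hsN P hPf Q hQf
        have uniq_i : ∀ X ∈ 𝒞 s, X ⊆ ζi → X = P :=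
          side_unique_aux hdisj hP hPi hQj (hne Q hQ) hmax' hc1
        have hmax'' : ∀ A ∈ 𝒞 s, ∀ B ∈ 𝒞 s, A ≠ B → ¬(A = Q ∧ B = P) →
            ¬(A = P ∧ B = Q) → h A B < h Q P := by
          intro A hA B hB hAB n1 n2
          rw [← hsym P Q]
          exact hmax' A hA B hB hAB n2 n1
        have hc2' : 1 < ((𝒞 s).filter (· ⊆ ζj)).card →
            ∃ A ∈ (𝒞 s).filter (· ⊆ ζj), ∃ B ∈ (𝒞 s).filter (· ⊆ ζj),
              A ≠ B ∧ h Q P ≤ h A B := by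
          intro hlt
          obtain ⟨A, hA, B, hB, hAB, hle⟩ := hc2 hlt
          exact ⟨A, hA, B, hB, hAB, by rwa [hsym Q P]⟩
        have uniq_j : ∀ X ∈ 𝒞 s, X ⊆ ζj → X = Q :=
          side_unique_aux hdisj.symm hQ hQj hPi (hne P hP) hmax'' hc2'
        constructor
        · refine Finset.Subset.antisymm hPi ?_
          intro x hx
          obtain ⟨C, hC, hxC⟩ := hcov x (Finset.mem_union_left _ hx)
          rcases hside C hC with hc | hc | hc
          · rw [uniq_i C hC hc] at hxC; exact hxC
          · exact absurd (hc hxC) (Finset.disjoint_left.mp hdisj hx)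
          · exact absurd (hc ▸ hC) noD
        · refine Finset.Subset.antisymm hQj ?_
          intro x hx
          obtain ⟨C, hC, hxC⟩ := hcov x (Finset.mem_union_right _ hx)
          rcases hside C hC with hc | hc | hc
          · exact absurd (hc hxC) (Finset.disjoint_right.mp hdisj hx)
          · rw [uniq_j C hC hc] at hxC; exact hxC
          · exact absurd (hc ▸ hC) noD
      -- side condition for the merged cluster
      have sideU : Cp ∪ Cq ⊆ ζi ∨ Cp ∪ Cq ⊆ ζj ∨ Cp ∪ Cq = ζi ∪ ζj := by
        have hCpS : Cp ⊆ ζi ∨ Cp ⊆ ζj := by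
          rcases hside Cp hCp with hc | hc | hc
          · exact Or.inl hc
          · exact Or.inr hc
          · exact absurd (hc ▸ hCp) noD
        have hCqS : Cq ⊆ ζi ∨ Cq ⊆ ζj := by
          rcases hside Cq hCq with hc | hc | hc
          · exact Or.inl hc
          · exact Or.inr hc
          · exact absurd (hc ▸ hCq) noD
        rcases hCpS with hp | hp <;> rcases hCqS with hq | hq
        · exact Or.inl (Finset.union_subset hp hq)
        · obtain ⟨h1, h2⟩ := crossCase Cp Cq hCp hCq hp hq hmax
          exact Or.inr (Or.inr (by rw [h1, h2]))
        · have hmaxswap : ∀ A ∈ 𝒞 s, ∀ B ∈ 𝒞 s, A ≠ B → ¬(A = Cq ∧ B = Cp) →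
              ¬(A = Cp ∧ B = Cq) → h A B < h Cq Cp := by
            intro A hA B hB hAB n1 n2
            rw [← hsym Cp Cq]
            exact hmax A hA B hB hAB n2 n1
          obtain ⟨h1, h2⟩ := crossCase Cq Cp hCq hCp hq hp hmaxswap
          exact Or.inr (Or.inr (by rw [h1, h2, Finset.union_comm]))
        · exact Or.inr (Or.inl (Finset.union_subset hp hq))
      refine ⟨?_, ?_, ?_, ?_⟩
      · intro C hC
        rcases (hmem C).mp hC with rfl | ⟨hC', -, -⟩
        · exact (hne Cp hCp).mono Finset.subset_union_left
        · exact hne C hC'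
      · intro C hC C' hC' hCC'
        rcases (hmem C).mp hC with rfl | ⟨hCs, hC1', hC2'⟩ <;>
          rcases (hmem C').mp hC' with h' | ⟨hCs', hC1'', hC2''⟩
        · exact absurd h'.symm hCC'
        · exact Finset.disjoint_union_left.mpr
            ⟨hdis Cp hCp C' hCs' (Ne.symm hC1''), hdis Cq hCq C' hCs' (Ne.symm hC2'')⟩
        · rw [h']
          exact Finset.disjoint_union_right.mpr
            ⟨hdis C hCs Cp hCp hC1', hdis C hCs Cq hCq hC2'⟩
        · exact hdis C hCs C' hCs' hCC'
      · intro x hx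
        obtain ⟨C, hC, hxC⟩ := hcov x hx
        by_cases hc1 : C = Cp
        · exact ⟨Cp ∪ Cq, (hmem _).mpr (Or.inl rfl),
            Finset.mem_union_left _ (hc1 ▸ hxC)⟩
        by_cases hc2 : C = Cq
        · exact ⟨Cp ∪ Cq, (hmem _).mpr (Or.inl rfl),
            Finset.mem_union_right _ (hc2 ▸ hxC)⟩
        · exact ⟨C, (hmem C).mpr (Or.inr ⟨hC, hc1, hc2⟩), hxC⟩
      · intro C hC
        rcases (hmem C).mp hC with rfl | ⟨hCs, -, -⟩
        · exact sideU
        · exact hside C hCs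
  refine ⟨fun s hs => (key s hs).2.2.2, ?_⟩
  -- find the first step where ζi ∪ ζj appears
  have hDN : (ζi ∪ ζj) ∈ 𝒞 N := by rw [hend]; exact Finset.mem_singleton_self _
  have hex : ∃ t, (ζi ∪ ζj) ∈ 𝒞 t := ⟨N, hDN⟩
  have htN : Nat.find hex ≤ N := Nat.find_le hDN
  have ht0 : Nat.find hex ≠ 0 := by
    intro h0'
    have hD0 := Nat.find_spec hex
    rw [h0', h0, Finset.mem_image] at hD0
    obtain ⟨a, -, ha⟩ := hD0
    have hia : ζi = {a} := by
      rcases Finset.subset_singleton_iff.mp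
        (ha ▸ (Finset.subset_union_left : ζi ⊆ ζi ∪ ζj)) with hh | hh
      · exact absurd hh hi.ne_empty
      · exact hh
    have hja : ζj = {a} := by
      rcases Finset.subset_singleton_iff.mp
        (ha ▸ (Finset.subset_union_right : ζj ⊆ ζi ∪ ζj)) with hh | hh
      · exact absurd hh hj.ne_empty
      · exact hh
    exact Finset.disjoint_left.mp hdisj (hia ▸ Finset.mem_singleton_self a)
      (hja ▸ Finset.mem_singleton_self a)
  obtain ⟨s, hts⟩ := Nat.exists_eq_succ_of_ne_zero ht0
  have hsN : s < N := by omega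
  have hDnot : (ζi ∪ ζj) ∉ 𝒞 s := Nat.find_min hex (by omega)
  obtain ⟨Cp, hCp, Cq, hCq, hpq, -, hC1⟩ := hstep s hsN
  have hDmem : (ζi ∪ ζj) ∈ 𝒞 (s + 1) := by have hsp := Nat.find_spec hex; rwa [hts] at hsp
  rw [hC1, Finset.mem_insert] at hDmem
  have hDU : ζi ∪ ζj = Cp ∪ Cq := by
    rcases hDmem with hh | hh
    · exact hh
    · exact absurd (Finset.mem_of_mem_erase (Finset.mem_of_mem_erase hh)) hDnot
  obtain ⟨-, -, -, hside⟩ := key s (le_of_lt hsN)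
  have hCpS : Cp ⊆ ζi ∨ Cp ⊆ ζj := by
    rcases hside Cp hCp with hc | hc | hc
    · exact Or.inl hc
    · exact Or.inr hc
    · exact absurd (hc ▸ hCp) hDnot
  have hCqS : Cq ⊆ ζi ∨ Cq ⊆ ζj := by
    rcases hside Cq hCq with hc | hc | hc
    · exact Or.inl hc
    · exact Or.inr hc
    · exact absurd (hc ▸ hCq) hDnot
  have main : ∀ P Q : Finset α, ζi ∪ ζj = P ∪ Q → P ⊆ ζi → Q ⊆ ζj →
      P = ζi ∧ Q = ζj := by
    intro P Q hU hP hQ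
    constructor
    · refine Finset.Subset.antisymm hP ?_
      intro x hx
      have hx' : x ∈ P ∪ Q := hU ▸ Finset.mem_union_left _ hx
      rcases Finset.mem_union.mp hx' with hh | hh
      · exact hh
      · exact absurd (hQ hh) (Finset.disjoint_left.mp hdisj hx)
    · refine Finset.Subset.antisymm hQ ?_
      intro x hx
      have hx' : x ∈ P ∪ Q := hU ▸ Finset.mem_union_right _ hx
      rcases Finset.mem_union.mp hx' with hh | hh
      · exact absurd (hP hh) (Finset.disjoint_right.mp hdisj hx)
      · exact hh
  have hsle : s ≤ N := le_of_lt hsN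
  rcases hCpS with hp | hp <;> rcases hCqS with hq | hq
  · -- both ⊆ ζi : impossible since ζj is nonempty
    exfalso
    obtain ⟨a, ha⟩ := hj
    have : a ∈ Cp ∪ Cq := hDU ▸ Finset.mem_union_right _ ha
    rcases Finset.mem_union.mp this with hh | hh
    · exact Finset.disjoint_right.mp hdisj ha (hp hh)
    · exact Finset.disjoint_right.mp hdisj ha (hq hh)
  · obtain ⟨h1, h2⟩ := main Cp Cq hDU hp hq
    exact ⟨⟨s, hsle, h1 ▸ hCp⟩, ⟨s, hsle, h2 ▸ hCq⟩⟩
  · obtain ⟨h1, h2⟩ := main Cq Cp (by rw [hDU, Finset.union_comm]) hq hp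
    exact ⟨⟨s, hsle, h1 ▸ hCq⟩, ⟨s, hsle, h2 ▸ hCp⟩⟩
  · -- both ⊆ ζj : impossible since ζi is nonempty
    exfalso
    obtain ⟨a, ha⟩ := hi
    have : a ∈ Cp ∪ Cq := hDU ▸ Finset.mem_union_left _ ha
    rcases Finset.mem_union.mp this with hh | hh
    · exact Finset.disjoint_left.mp hdisj ha (hp hh)
    · exact Finset.disjoint_left.mp hdisj ha (hq hh)
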